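/- arXiv:2407.07242 — 3 statements merged into one kernel-verified Lean document; each statement's English description precedes it below -/
import Mathlib

section
/- For a summable strictly positive function λ : ℤ → ℝ satisfying the subconvolutivity condition (λ * λ)(j) ≤ C·λ(j) for all j (where * denotes convolution on ℤ), the pointwise product of two functions f, g on the circle whose Fourier coefficients satisfy Σ_j |f̂(j)|²/λ(j) < ∞ and Σ_j |ĝ(j)|²/λ(j) < ∞ also satisfies Σ_j |(fg)^(j)|²/λ(j) ≤ C·(Σ_j |f̂(j)|²/λ(j))·(Σ_j |ĝ(j)|²/λ(j)). In particular the associated reproducing kernel Hilbert space is closed under pointwise multiplication. -/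
/-- Cauchy–Schwarz inequality for infinite sums of nonnegative reals. -/
lemma tsum_cauchy_schwarz {f g : ℤ → ℝ} (hf : ∀ i, 0 ≤ f i) (hg : ∀ i, 0 ≤ g i)
    (hf2 : Summable (fun i => f i ^ 2)) (hg2 : Summable (fun i => g i ^ 2)) :
    Summable (fun i => f i * g i) ∧
      (∑' i, f i * g i) ^ 2 ≤ (∑' i, f i ^ 2) * (∑' i, g i ^ 2) := by
  have hmul : Summable (fun i => f i * g i) := by
    refine Summable.of_nonneg_of_le (fun i => mul_nonneg (hf i) (hg i)) (fun i => ?_)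
      ((hf2.add hg2).div_const 2)
    rw [le_div_iff₀ (by norm_num : (0:ℝ) < 2), mul_comm (f i * g i) 2]
    calc 2 * (f i * g i) = 2 * f i * g i := by ring
      _ ≤ f i ^ 2 + g i ^ 2 := two_mul_le_add_sq (f i) (g i)
  refine ⟨hmul, ?_⟩
  set F := ∑' i, f i ^ 2 with hF
  set G := ∑' i, g i ^ 2 with hG
  have hFnn : 0 ≤ F := tsum_nonneg fun i => sq_nonneg _
  have hGnn : 0 ≤ G := tsum_nonneg fun i => sq_nonneg _
  have key : ∑' i, f i * g i ≤ Real.sqrt (F * G) := by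
    refine Summable.tsum_le_of_sum_le hmul fun s => ?_
    have hsnn : 0 ≤ ∑ i ∈ s, f i * g i :=
      Finset.sum_nonneg fun i _ => mul_nonneg (hf i) (hg i)
    refine Real.le_sqrt_of_sq_le ?_
    calc (∑ i ∈ s, f i * g i) ^ 2 ≤ (∑ i ∈ s, f i ^ 2) * ∑ i ∈ s, g i ^ 2 :=
          Finset.sum_mul_sq_le_sq_mul_sq s f g
      _ ≤ F * G := by
          refine mul_le_mul ?_ ?_ (Finset.sum_nonneg fun i _ => sq_nonneg _) hFnn
          · exact Summable.sum_le_tsum s (fun i _ => sq_nonneg _) hf2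
          · exact Summable.sum_le_tsum s (fun i _ => sq_nonneg _) hg2
  calc (∑' i, f i * g i) ^ 2 ≤ Real.sqrt (F * G) ^ 2 :=
        pow_le_pow_left₀ (tsum_nonneg fun i => mul_nonneg (hf i) (hg i)) key 2
    _ = F * G := Real.sq_sqrt (mul_nonneg hFnn hGnn)

/-- The measure-preserving shear `(i, j) ↦ (i, j - i)` on `ℤ × ℤ`. -/
def shearEquiv : ℤ × ℤ ≃ ℤ × ℤ :=
  ⟨fun p => (p.1, p.2 - p.1), fun p => (p.1, p.2 + p.1),
    fun p => by simp, fun p => by simp⟩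

/-- Subconvolutivity of the weight function implies that the associated RKHS of
functions on the circle (characterized by the decay condition
`∑ j, |f̂ j|² / λ j < ∞` on Fourier coefficients) is closed under pointwise
multiplication: if `c` is the convolution of the Fourier coefficient sequences
`a = f̂` and `b = ĝ` (i.e. the Fourier coefficients of `f·g`), then
`∑ j, |c j|² / λ j ≤ C · (∑ j, |a j|² / λ j) · (∑ j, |b j|² / λ j)`. -/
theorem rkha_closed_under_mul (lam : ℤ → ℝ) (hpos : ∀ j, 0 < lam j)
    (hsum : Summable lam) (C : ℝ) (hC : 0 < C)
    (hsub : ∀ j : ℤ, ∑' i : ℤ, lam i * lam (j - i) ≤ C * lam j)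
    (a b : ℤ → ℂ)
    (ha : Summable fun j => ‖a j‖ ^ 2 / lam j)
    (hb : Summable fun j => ‖b j‖ ^ 2 / lam j)
    (c : ℤ → ℂ) (hc : ∀ j : ℤ, HasSum (fun i => a i * b (j - i)) (c j)) :
    Summable (fun j => ‖c j‖ ^ 2 / lam j) ∧
      ∑' j : ℤ, ‖c j‖ ^ 2 / lam j ≤
        C * (∑' j : ℤ, ‖a j‖ ^ 2 / lam j) * (∑' j : ℤ, ‖b j‖ ^ 2 / lam j) := by
  set A : ℤ → ℝ := fun j => ‖a j‖ ^ 2 / lam j with hA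
  set B : ℤ → ℝ := fun j => ‖b j‖ ^ 2 / lam j with hB
  have hAnn : ∀ j, 0 ≤ A j := fun j => div_nonneg (sq_nonneg _) (hpos j).le
  have hBnn : ∀ j, 0 ≤ B j := fun j => div_nonneg (sq_nonneg _) (hpos j).le
  -- 2D summability of (i, j) ↦ A i * B (j - i)
  have hAB2 : Summable (fun p : ℤ × ℤ => A p.1 * B p.2) :=
    ha.mul_of_nonneg hb hAnn hBnn
  have hAB : Summable (fun p : ℤ × ℤ => A p.1 * B (p.2 - p.1)) := by
    have := hAB2.comp_injective shearEquiv.injective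
    simpa [Function.comp_def, shearEquiv] using this
  have hABswap : Summable (fun p : ℤ × ℤ => A p.2 * B (p.1 - p.2)) := hAB.prod_symm
  -- marginal sums
  set S : ℤ → ℝ := fun j => ∑' i, A i * B (j - i) with hS
  obtain ⟨hSslice, hSsum⟩ :=
    (summable_prod_of_nonneg (f := fun p : ℤ × ℤ => A p.2 * B (p.1 - p.2))
      (fun p => mul_nonneg (hAnn _) (hBnn _))).mp hABswap
  have hSsum' : Summable S := hSsum
  have hStsum : ∑' j, S j = (∑' j, A j) * (∑' j, B j) := by
    have h1 : ∑' j, S j = ∑' p : ℤ × ℤ, A p.2 * B (p.1 - p.2) :=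
      (Summable.tsum_prod' hABswap hSslice).symm
    have h2 : ∑' p : ℤ × ℤ, A p.2 * B (p.1 - p.2)
        = ∑' p : ℤ × ℤ, A p.1 * B (p.2 - p.1) := by
      exact ((Equiv.prodComm ℤ ℤ).tsum_eq _).symm
    have h3 : ∑' p : ℤ × ℤ, A p.1 * B (p.2 - p.1) = ∑' p : ℤ × ℤ, A p.1 * B p.2 := by
      have := shearEquiv.tsum_eq (fun p : ℤ × ℤ => A p.1 * B p.2)
      simpa [shearEquiv] using this
    have h4 : ∑' p : ℤ × ℤ, A p.1 * B p.2 = (∑' j, A j) * (∑' j, B j) := by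
      rw [Summable.tsum_prod' hAB2 (fun i => (hb.mul_left (A i)))]
      simp_rw [tsum_mul_left]
      exact tsum_mul_right
    rw [h1, h2, h3, h4]
  -- bound lam by its total sum
  set T := ∑' j, lam j with hT
  have hlamT : ∀ j, lam j ≤ T := fun j => Summable.le_tsum hsum j fun k _ => (hpos k).le
  have hBtot : ∀ j, B j ≤ ∑' k, B k := fun j => Summable.le_tsum hb j fun k _ => hBnn k
  -- pointwise estimate
  have hpt : ∀ j : ℤ, ‖c j‖ ^ 2 / lam j ≤ C * S j := by
    intro j
    set f : ℤ → ℝ := fun i => Real.sqrt (lam i * lam (j - i)) with hf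
    set g : ℤ → ℝ := fun i => ‖a i‖ * ‖b (j - i)‖ / Real.sqrt (lam i * lam (j - i)) with hg
    have hllnn : ∀ i, 0 ≤ lam i * lam (j - i) := fun i =>
      mul_nonneg (hpos _).le (hpos _).le
    have hfnn : ∀ i, 0 ≤ f i := fun i => Real.sqrt_nonneg _
    have hgnn : ∀ i, 0 ≤ g i := fun i =>
      div_nonneg (mul_nonneg (norm_nonneg _) (norm_nonneg _)) (Real.sqrt_nonneg _)
    have hfsq : ∀ i, f i ^ 2 = lam i * lam (j - i) := fun i => Real.sq_sqrt (hllnn i)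
    have hgsq : ∀ i, g i ^ 2 = A i * B (j - i) := by
      intro i
      rw [hg]
      simp only [div_pow, mul_pow, Real.sq_sqrt (hllnn i)]
      rw [hA, hB]
      field_simp
    have hfg : ∀ i, f i * g i = ‖a i‖ * ‖b (j - i)‖ := by
      intro i
      rw [hf, hg]
      have : Real.sqrt (lam i * lam (j - i)) ≠ 0 :=
        Real.sqrt_ne_zero'.mpr (mul_pos (hpos _) (hpos _))
      field_simp
    have hf2 : Summable (fun i => f i ^ 2) := by
      simp_rw [hfsq]
      refine Summable.of_nonneg_of_le hllnn (fun i => ?_) (hsum.mul_right T)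
      exact mul_le_mul_of_nonneg_left (hlamT _) (hpos i).le
    have hg2 : Summable (fun i => g i ^ 2) := by
      simp_rw [hgsq]
      exact hSslice j
    obtain ⟨hmul, hcs⟩ := tsum_cauchy_schwarz hfnn hgnn hf2 hg2
    have hnorm : ‖c j‖ ≤ ∑' i, f i * g i := by
      have hmul' : Summable fun i => ‖a i * b (j - i)‖ := by
        simpa [hfg, norm_mul] using hmul
      calc ‖c j‖ = ‖∑' i, a i * b (j - i)‖ := by rw [(hc j).tsum_eq]
        _ ≤ ∑' i, ‖a i * b (j - i)‖ := norm_tsum_le_tsum_norm hmul'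
        _ = ∑' i, f i * g i := by simp [hfg, norm_mul]
    have hsq : ‖c j‖ ^ 2 ≤ (∑' i, f i ^ 2) * (∑' i, g i ^ 2) :=
      le_trans (pow_le_pow_left₀ (norm_nonneg _) hnorm 2) hcs
    have hfs : ∑' i, f i ^ 2 ≤ C * lam j := by
      calc ∑' i, f i ^ 2 = ∑' i, lam i * lam (j - i) := by simp_rw [hfsq]
        _ ≤ C * lam j := hsub j
    have hgs : ∑' i, g i ^ 2 = S j := by simp_rw [hgsq]; rfl
    have hSnn : 0 ≤ S j := tsum_nonneg fun i => mul_nonneg (hAnn _) (hBnn _)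
    rw [div_le_iff₀ (hpos j)]
    calc ‖c j‖ ^ 2 ≤ (∑' i, f i ^ 2) * S j := by rw [← hgs]; exact hsq
      _ ≤ (C * lam j) * S j := mul_le_mul_of_nonneg_right hfs hSnn
      _ = C * S j * lam j := by ring
  -- conclude
  have hCS : Summable (fun j => C * S j) := hSsum'.mul_left C
  have hcsum : Summable (fun j => ‖c j‖ ^ 2 / lam j) :=
    Summable.of_nonneg_of_le (fun j => div_nonneg (sq_nonneg _) (hpos j).le) hpt hCS
  refine ⟨hcsum, ?_⟩
  calc ∑' j, ‖c j‖ ^ 2 / lam j ≤ ∑' j, C * S j := Summable.tsum_le_tsum hpt hcsum hCS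
    _ = C * ∑' j, S j := tsum_mul_left
    _ = C * (∑' j, A j) * (∑' j, B j) := by rw [hStsum]; ring
end

section
/- The function λ_τ : ℤ → ℝ defined by λ_τ(j) = exp(-τ|j|^p) for fixed τ > 0 and p ∈ (0,1) is subconvolutive: there exists C > 0 such that Σ_{i∈ℤ} λ_τ(i)·λ_τ(j-i) ≤ C·λ_τ(j) for all j ∈ ℤ. -/
open Real

-- concavity trick: for 0 ≤ a ≤ b, (a+b)^p + a^p ≤ (2a)^p + b^p
lemma concave_trick {p : ℝ} (hp0 : 0 < p) (hp1 : p < 1) {a b : ℝ}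
    (ha : 0 ≤ a) (hab : a ≤ b) :
    (a + b) ^ p + a ^ p ≤ (2 * a) ^ p + b ^ p := by
  have hb : 0 ≤ b := ha.trans hab
  rcases eq_or_lt_of_le hb with hb0 | hb0
  · have ha0 : a = 0 := le_antisymm (hab.trans hb0.ge) ha
    simp [ha0, ← hb0]
  · have hf := Real.concaveOn_rpow hp0.le hp1.le
    set lam := (b - a) / b with hlam
    set mu := a / b with hmu
    have hlam0 : 0 ≤ lam := div_nonneg (by linarith) hb
    have hmu0 : 0 ≤ mu := div_nonneg ha hb
    have hsum : lam + mu = 1 := by rw [hlam, hmu, ← add_div, sub_add_cancel, div_self hb0.ne']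
    have hmem1 : a ∈ Set.Ici (0:ℝ) := ha
    have hmem2 : a + b ∈ Set.Ici (0:ℝ) := by simp [Set.mem_Ici]; linarith
    have h1 := hf.2 hmem1 hmem2 hlam0 hmu0 hsum
    have h2 := hf.2 hmem1 hmem2 hmu0 hlam0 (by linarith)
    have e1 : lam • a + mu • (a + b) = 2 * a := by
      rw [smul_eq_mul, smul_eq_mul, hlam, hmu, div_mul_eq_mul_div, div_mul_eq_mul_div, ← add_div, div_eq_iff hb0.ne']; ring
    have e2 : mu • a + lam • (a + b) = b := by
      rw [smul_eq_mul, smul_eq_mul, hlam, hmu, div_mul_eq_mul_div, div_mul_eq_mul_div, ← add_div, div_eq_iff hb0.ne']; ring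
    rw [e1] at h1; rw [e2] at h2
    simp only [smul_eq_mul] at h1 h2
    have eA : lam * a ^ p + mu * a ^ p = a ^ p := by rw [← add_mul, hsum, one_mul]
    have eB : lam * (a + b) ^ p + mu * (a + b) ^ p = (a + b) ^ p := by
      rw [← add_mul, hsum, one_mul]
    linarith

-- key inequality
lemma key_ineq {p : ℝ} (hp0 : 0 < p) (hp1 : p < 1) {a b c : ℝ}
    (ha : 0 ≤ a) (hab : a ≤ b) (hc : 0 ≤ c) (hcab : c ≤ a + b) :
    c ^ p + (2 - 2 ^ p) * a ^ p ≤ a ^ p + b ^ p := by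
  have h1 : c ^ p ≤ (a + b) ^ p := Real.rpow_le_rpow hc hcab hp0.le
  have h2 := concave_trick hp0 hp1 ha hab
  have h3 : (2 * a) ^ p = 2 ^ p * a ^ p := Real.mul_rpow (by norm_num) ha
  nlinarith

lemma summable_exp_neg_rpow_nat {d p : ℝ} (hd : 0 < d) (hp0 : 0 < p) :
    Summable fun n : ℕ => Real.exp (-d * (n : ℝ) ^ p) := by
  set m : ℕ := ⌈2 / p⌉₊ with hm
  have hpm : 2 ≤ p * m := by
    have h2p : 2 / p ≤ (m : ℝ) := Nat.le_ceil _
    calc (2:ℝ) = p * (2 / p) := by field_simp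
    _ ≤ p * m := by nlinarith
  rw [← summable_nat_add_iff 1]
  have hsum : Summable fun n : ℕ => (Nat.factorial m / d ^ m) * ((n : ℝ) + 1) ^ (-(p * m)) := by
    apply Summable.mul_left
    have : Summable fun n : ℕ => (n : ℝ) ^ (-(p * m)) :=
      summable_nat_rpow.mpr (by linarith)
    have := (summable_nat_add_iff 1).mpr this
    simpa using this
  apply Summable.of_nonneg_of_le (fun n => (Real.exp_pos _).le) _ hsum
  intro n
  set x : ℝ := (n : ℝ) + 1 with hx
  have hx1 : (1:ℝ) ≤ x := by simp [hx]
  have hx0 : (0:ℝ) < x := by linarith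
  have hxp : 0 < x ^ p := Real.rpow_pos_of_pos hx0 p
  have hy : 0 < d * x ^ p := by positivity
  have hexp : (d * x ^ p) ^ m / Nat.factorial m ≤ Real.exp (d * x ^ p) :=
    Real.pow_div_factorial_le_exp _ hy.le m
  have hfac : (0:ℝ) < Nat.factorial m := by positivity
  have hpow : (0:ℝ) < (d * x ^ p) ^ m := by positivity
  have h1 : Real.exp (-(d * x ^ p)) ≤ Nat.factorial m / (d * x ^ p) ^ m := by
    rw [Real.exp_neg]
    have := inv_anti₀ (show (0:ℝ) < (d * x ^ p) ^ m / Nat.factorial m by positivity) hexp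
    rwa [inv_div] at this
  have hcast : ((n+1:ℕ):ℝ) = x := by push_cast [hx]; ring
  rw [hcast]
  calc Real.exp (-d * x ^ p) = Real.exp (-(d * x ^ p)) := by ring_nf
  _ ≤ Nat.factorial m / (d * x ^ p) ^ m := h1
  _ = (Nat.factorial m / d ^ m) * x ^ (-(p * m)) := by
      rw [Real.rpow_neg hx0.le, Real.rpow_mul hx0.le, Real.rpow_natCast, mul_pow]
      have h2 : (x ^ p) ^ m ≠ 0 := by positivity
      have h3 : d ^ m ≠ 0 := by positivity
      field_simp

lemma summable_exp_neg_rpow_int {d p : ℝ} (hd : 0 < d) (hp0 : 0 < p) :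
    Summable fun i : ℤ => Real.exp (-d * |(i : ℝ)| ^ p) := by
  apply Summable.of_nat_of_neg
  · simpa using summable_exp_neg_rpow_nat hd hp0
  · simpa using summable_exp_neg_rpow_nat hd hp0

lemma pt_bound {τ p : ℝ} (hτ : 0 < τ) (hp0 : 0 < p) (hp1 : p < 1) {A B J : ℝ}
    (hA : 0 ≤ A) (hB : 0 ≤ B) (hJ : 0 ≤ J) (htri : J ≤ A + B) (hAB : A ≤ B) :
    Real.exp (-τ * A ^ p) * Real.exp (-τ * B ^ p)
      ≤ Real.exp (-τ * J ^ p) * Real.exp (-(τ * (2 - 2 ^ p)) * A ^ p) := by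
  rw [← Real.exp_add, ← Real.exp_add]
  apply Real.exp_le_exp.mpr
  have hkey := key_ineq hp0 hp1 hA hAB hJ htri
  nlinarith [hkey, hτ]

/-- The subexponential weight `λ_τ(j) = exp (-τ |j|^p)` with `τ > 0` and
`p ∈ (0,1)` is subconvolutive: there is `C > 0` with
`∑ i, λ_τ(i) · λ_τ(j - i) ≤ C · λ_τ(j)` for all `j ∈ ℤ`. -/
theorem subexp_weight_subconvolutive (τ p : ℝ) (hτ : 0 < τ) (hp : p ∈ Set.Ioo (0:ℝ) 1) :
    ∃ C : ℝ, 0 < C ∧ ∀ j : ℤ,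
      (∑' i : ℤ, Real.exp (-τ * |(i : ℝ)| ^ p) * Real.exp (-τ * |((j - i : ℤ) : ℝ)| ^ p))
        ≤ C * Real.exp (-τ * |(j : ℝ)| ^ p) := by
  obtain ⟨hp0, hp1⟩ := hp
  have h2p : (2:ℝ) ^ p < 2 := by
    calc (2:ℝ) ^ p < 2 ^ (1:ℝ) := (Real.rpow_lt_rpow_left_iff (by norm_num)).mpr hp1
    _ = 2 := Real.rpow_one 2
  set c := τ * (2 - 2 ^ p) with hc
  have hcpos : 0 < c := by nlinarith
  have hsumc : Summable fun i : ℤ => Real.exp (-c * |(i : ℝ)| ^ p) :=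
    summable_exp_neg_rpow_int hcpos hp0
  set S := ∑' i : ℤ, Real.exp (-c * |(i : ℝ)| ^ p) with hS
  have hS1 : 1 ≤ S := by
    have h := Summable.le_tsum hsumc 0 (fun i _ => (Real.exp_pos _).le)
    rw [show Real.exp (-c * |((0:ℤ):ℝ)| ^ p) = 1 by simp [Real.zero_rpow hp0.ne']] at h
    rw [hS]
    exact h
  refine ⟨2 * S, by linarith, fun j => ?_⟩
  have hpt : ∀ i : ℤ,
      Real.exp (-τ * |(i : ℝ)| ^ p) * Real.exp (-τ * |((j - i : ℤ) : ℝ)| ^ p)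
      ≤ Real.exp (-τ * |(j : ℝ)| ^ p) *
        (Real.exp (-c * |(i : ℝ)| ^ p) + Real.exp (-c * |((j - i : ℤ) : ℝ)| ^ p)) := by
    intro i
    have hA : 0 ≤ |(i:ℝ)| := abs_nonneg _
    have hB : 0 ≤ |((j - i : ℤ):ℝ)| := abs_nonneg _
    have hJ : 0 ≤ |(j:ℝ)| := abs_nonneg _
    have htri : |(j:ℝ)| ≤ |(i:ℝ)| + |((j - i : ℤ):ℝ)| := by
      have h : (j:ℝ) = (i:ℝ) + ((j - i : ℤ):ℝ) := by push_cast; ring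
      rw [h]; exact abs_add_le _ _
    have hpos1 := (Real.exp_pos (-c * |(i:ℝ)| ^ p)).le
    have hpos2 := (Real.exp_pos (-c * |((j - i : ℤ):ℝ)| ^ p)).le
    have hposj := (Real.exp_pos (-τ * |(j:ℝ)| ^ p)).le
    rcases le_total |(i:ℝ)| |((j - i : ℤ):ℝ)| with hAB | hAB
    · have := pt_bound hτ hp0 hp1 hA hB hJ htri hAB
      rw [← hc] at this
      nlinarith
    · have := pt_bound hτ hp0 hp1 hB hA hJ (by linarith) hAB
      rw [← hc] at this
      nlinarith
  have hsumg : Summable fun i : ℤ => Real.exp (-c * |((j - i : ℤ) : ℝ)| ^ p) := by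
    have h := (Equiv.subLeft j).summable_iff
      (f := fun k : ℤ => Real.exp (-c * |(k : ℝ)| ^ p)) |>.mpr hsumc
    simpa [Function.comp_def, Equiv.subLeft_apply] using h
  have hsum1 : Summable fun i : ℤ =>
      Real.exp (-τ * |(i : ℝ)| ^ p) * Real.exp (-τ * |((j - i : ℤ) : ℝ)| ^ p) := by
    apply Summable.of_nonneg_of_le (fun i => by positivity) (fun i => ?_)
      (summable_exp_neg_rpow_int hτ hp0)
    have h1 : Real.exp (-τ * |((j - i : ℤ):ℝ)| ^ p) ≤ 1 := by
      apply Real.exp_le_one_iff.mpr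
      nlinarith [Real.rpow_nonneg (abs_nonneg (((j - i : ℤ)):ℝ)) p]
    nlinarith [Real.exp_pos (-τ * |(i:ℝ)| ^ p), (Real.exp_pos (-τ * |((j - i : ℤ):ℝ)| ^ p)).le]
  have hsumr : Summable fun i : ℤ => Real.exp (-τ * |(j : ℝ)| ^ p) *
      (Real.exp (-c * |(i : ℝ)| ^ p) + Real.exp (-c * |((j - i : ℤ) : ℝ)| ^ p)) :=
    (hsumc.add hsumg).mul_left _
  have hgEq : (∑' i : ℤ, Real.exp (-c * |((j - i : ℤ) : ℝ)| ^ p)) = S := by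
    rw [hS]
    have := (Equiv.subLeft j).tsum_eq (fun k : ℤ => Real.exp (-c * |(k : ℝ)| ^ p))
    simpa using this
  calc (∑' i : ℤ, Real.exp (-τ * |(i : ℝ)| ^ p) * Real.exp (-τ * |((j - i : ℤ) : ℝ)| ^ p))
      ≤ ∑' i : ℤ, Real.exp (-τ * |(j : ℝ)| ^ p) *
        (Real.exp (-c * |(i : ℝ)| ^ p) + Real.exp (-c * |((j - i : ℤ) : ℝ)| ^ p)) :=
        Summable.tsum_le_tsum hpt hsum1 hsumr
  _ = Real.exp (-τ * |(j : ℝ)| ^ p) * (S + S) := by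
        rw [tsum_mul_left, Summable.tsum_add hsumc hsumg, hgEq]
  _ = 2 * S * Real.exp (-τ * |(j : ℝ)| ^ p) := by ring
end

section
/- Let I_j be the modified Bessel function of the first kind of order j. Then for all κ > 0 and d ∈ ℕ, Σ_{j=d}^∞ I_j(κ) ≤ e^{κ/2} · I_d(κ). -/
open scoped Nat

/-- The modified Bessel function of the first kind of integer order `j ≥ 0`,
`I_j(x) = ∑_{r=0}^∞ (x/2)^(j+2r) / (r! (r+j)!)`. -/
noncomputable def besselI (j : ℕ) (x : ℝ) : ℝ :=
  ∑' r : ℕ, (x / 2) ^ (j + 2 * r) / ((Nat.factorial r : ℝ) * (Nat.factorial (r + j) : ℝ))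

lemma summable_besselI_term (j : ℕ) (x : ℝ) (hx : 0 ≤ x) :
    Summable (fun r : ℕ => (x / 2) ^ (j + 2 * r) / ((r ! : ℝ) * ((r + j)! : ℝ))) := by
  apply Summable.of_nonneg_of_le (fun r => by positivity) (fun r => ?_)
    ((Real.summable_pow_div_factorial ((x / 2) ^ 2)).mul_left ((x / 2) ^ j))
  have h1 : (x / 2) ^ (j + 2 * r) = (x / 2) ^ j * ((x / 2) ^ 2) ^ r := by
    rw [pow_add, pow_mul]
  rw [h1, mul_div_assoc]
  gcongr
  have h2 : (1 : ℝ) ≤ ((r + j)! : ℝ) := by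
    exact_mod_cast Nat.one_le_iff_ne_zero.mpr (Nat.factorial_ne_zero (r + j))
  have hr : (0 : ℝ) ≤ (r ! : ℝ) := by positivity
  nlinarith

lemma besselI_nonneg (j : ℕ) (x : ℝ) (hx : 0 ≤ x) : 0 ≤ besselI j x :=
  tsum_nonneg fun r => by positivity

lemma besselI_le (d j : ℕ) (κ : ℝ) (hκ : 0 < κ) :
    besselI (d + j) κ ≤ (κ / 2) ^ j / (j ! : ℝ) * besselI d κ := by
  unfold besselI
  rw [← tsum_mul_left]
  refine Summable.tsum_le_tsum (fun r => ?_) (summable_besselI_term _ _ hκ.le)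
    ((summable_besselI_term d κ hκ.le).mul_left _)
  rw [div_mul_div_comm]
  have hnum : (κ / 2) ^ (d + j + 2 * r) = (κ / 2) ^ j * (κ / 2) ^ (d + 2 * r) := by
    rw [← pow_add]; ring_nf
  rw [hnum]
  apply div_le_div_of_nonneg_left (by positivity) (by positivity)
  have hle : (r + d)! * j ! ≤ (r + d + j)! :=
    Nat.le_of_dvd (Nat.factorial_pos _) (Nat.factorial_mul_factorial_dvd_factorial_add (r + d) j)
  have h2 : r + d + j = r + (d + j) := by omega
  rw [h2] at hle
  calc (j ! : ℝ) * ((r ! : ℝ) * ((r + d)! : ℝ))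
      = (r ! : ℝ) * (((r + d)! : ℝ) * (j ! : ℝ)) := by ring
    _ ≤ (r ! : ℝ) * ((r + (d + j))! : ℝ) := by
        have h3 : (((r + d)! : ℕ) * j ! : ℝ) ≤ (((r + (d + j))! : ℕ) : ℝ) := by exact_mod_cast hle
        have hr : (0 : ℝ) ≤ (r ! : ℝ) := by positivity
        push_cast at h3 ⊢
        nlinarith

/-- Tail-sum bound for modified Bessel functions:
`∑_{j=d}^∞ I_j(κ) ≤ e^(κ/2) · I_d(κ)`. -/
theorem besselI_tail_sum_le (κ : ℝ) (hκ : 0 < κ) (d : ℕ) :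
    ∑' j : ℕ, besselI (d + j) κ ≤ Real.exp (κ / 2) * besselI d κ := by
  have hsum : Summable (fun j : ℕ => (κ / 2) ^ j / (j ! : ℝ) * besselI d κ) :=
    (Real.summable_pow_div_factorial (κ / 2)).mul_right _
  have h1 : ∑' j : ℕ, besselI (d + j) κ ≤ ∑' j : ℕ, (κ / 2) ^ j / (j ! : ℝ) * besselI d κ := by
    refine Summable.tsum_le_tsum (fun j => besselI_le d j κ hκ) ?_ hsum
    exact Summable.of_nonneg_of_le (fun j => besselI_nonneg _ _ hκ.le)
      (fun j => besselI_le d j κ hκ) hsum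
  refine h1.trans_eq ?_
  rw [tsum_mul_right, Real.exp_eq_exp_ℝ, NormedSpace.exp_eq_tsum_div]
end
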